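/- Let A_0 be a real symmetric positive definite n×n matrix, let x_0, …, x_{T−1} ∈ ℝⁿ, define recursively A_{t+1} = A_t + x_t x_tᵀ, let c ≥ 0, and let R_0, …, R_{T−1} be real numbers satisfying 0 ≤ R_t and R_t² ≤ 9·c²·min(x_tᵀ A_t⁻¹ x_t, 1) for each t. Then Σ_{t=0}^{T−1} R_t ≤ 3·c·√(2·T·(log det(A_T) − log det(A_0))). -/

import Mathlib

/-!
Each rank-one update multiplies the determinant by `1 + xᵀA⁻¹x` (matrix determinant lemma),
and `min s 1 ≤ 2 log (1 + s)`, so the truncated quadratic forms telescope into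
`2 (log det A_T - log det A_0)` (the elliptical potential lemma). Cauchy–Schwarz,
`(∑ R_t)² ≤ T ∑ R_t²`, then turns the per-step bounds into the bound on the sum.
-/

open Matrix Finset Real

theorem Matrix.det_add_vecMulVec {m α : Type*} [Fintype m] [DecidableEq m] [CommRing α]
    {A : Matrix m m α} (hA : IsUnit A.det) (u v : m → α) :
    (A + vecMulVec u v).det = A.det * (1 + v ⬝ᵥ A⁻¹ *ᵥ u) := by
  rw [vecMulVec_eq Unit, det_add_replicateCol_mul_replicateRow hA, Matrix.mul_assoc,
    ← replicateCol_mulVec]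
  congr 1
  rw [det_unique, add_apply, one_apply_eq, replicateRow_mul_replicateCol_apply]

lemma Real.min_one_le_two_mul_log_one_add {s : ℝ} (hs : 0 ≤ s) : min s 1 ≤ 2 * log (1 + s) := by
  set u := min s 1
  have hu0 : 0 ≤ u := le_min hs zero_le_one
  have hu1 : u ≤ 1 := min_le_right s 1
  calc u ≤ 2 * (2 * u / (u + 2)) := by
        rw [mul_div_assoc', le_div_iff₀ (by linarith)]
        nlinarith
    _ ≤ 2 * log (1 + u) := by gcongr; exact le_log_one_add_of_nonneg hu0
    _ ≤ 2 * log (1 + s) := by gcongr; exact min_le_left s 1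

lemma Finset.sum_le_sqrt_card_mul_sum_sq {ι : Type*} (s : Finset ι) (f : ι → ℝ) :
    ∑ i ∈ s, f i ≤ √(#s * ∑ i ∈ s, f i ^ 2) :=
  le_sqrt_of_sq_le sq_sum_le_card_mul_sum_sq

section EllipticalPotential

variable {ι : Type*} [Fintype ι]

lemma Matrix.PosDef.min_dotProduct_inv_mulVec_le_log_det_add [DecidableEq ι]
    {A : Matrix ι ι ℝ} (hA : A.PosDef) (x : ι → ℝ) :
    min (x ⬝ᵥ A⁻¹ *ᵥ x) 1 ≤ 2 * (log (A + vecMulVec x x).det - log A.det) := by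
  have hq : 0 ≤ x ⬝ᵥ A⁻¹ *ᵥ x := by
    simpa using hA.posSemidef.inv.dotProduct_mulVec_nonneg x
  rw [det_add_vecMulVec (isUnit_iff_ne_zero.mpr hA.det_pos.ne'),
    log_mul hA.det_pos.ne' (by linarith), add_sub_cancel_left]
  exact min_one_le_two_mul_log_one_add hq

variable {A : ℕ → Matrix ι ι ℝ} {x : ℕ → ι → ℝ}

lemma posDef_of_add_vecMulVec (hA0 : (A 0).PosDef)
    (hrec : ∀ t, A (t + 1) = A t + vecMulVec (x t) (x t)) (t : ℕ) : (A t).PosDef := by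
  induction t with
  | zero => exact hA0
  | succ t ih => simpa [hrec t] using ih.add_posSemidef (posSemidef_vecMulVec_self_star (x t))

theorem sum_min_dotProduct_inv_mulVec_le_log_det [DecidableEq ι] (hA0 : (A 0).PosDef)
    (hrec : ∀ t, A (t + 1) = A t + vecMulVec (x t) (x t)) (T : ℕ) :
    ∑ t ∈ range T, min (x t ⬝ᵥ (A t)⁻¹ *ᵥ x t) 1 ≤ 2 * (log (A T).det - log (A 0).det) := by
  calc ∑ t ∈ range T, min (x t ⬝ᵥ (A t)⁻¹ *ᵥ x t) 1
      ≤ ∑ t ∈ range T, 2 * (log (A (t + 1)).det - log (A t).det) := by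
        gcongr with t
        rw [hrec t]
        exact (posDef_of_add_vecMulVec hA0 hrec t).min_dotProduct_inv_mulVec_le_log_det_add (x t)
    _ = 2 * (log (A T).det - log (A 0).det) := by
        rw [← mul_sum, sum_range_sub (fun t ↦ log (A t).det)]

end EllipticalPotential

theorem stmt_14_general {n : ℕ} (T : ℕ) (x : ℕ → (Fin n → ℝ))
    (A : ℕ → Matrix (Fin n) (Fin n) ℝ) (hA0 : (A 0).PosDef)
    (hrec : ∀ t, A (t + 1) = A t + vecMulVec (x t) (x t))
    (c : ℝ) (hc : 0 ≤ c) (R : ℕ → ℝ)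
    (hR : ∀ t < T, (R t) ^ 2 ≤ 9 * c ^ 2 * min (x t ⬝ᵥ ((A t)⁻¹ *ᵥ x t)) 1) :
    ∑ t ∈ Finset.range T, R t ≤
      3 * c * Real.sqrt (2 * T * (Real.log (A T).det - Real.log (A 0).det)) := by
  have hpot := sum_min_dotProduct_inv_mulVec_le_log_det hA0 hrec T
  calc ∑ t ∈ range T, R t ≤ √(T * ∑ t ∈ range T, R t ^ 2) := by
        simpa using sum_le_sqrt_card_mul_sum_sq (range T) R
    _ ≤ √(T * (9 * c ^ 2 * (2 * (log (A T).det - log (A 0).det)))) := by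
        gcongr
        calc ∑ t ∈ range T, R t ^ 2
            ≤ ∑ t ∈ range T, 9 * c ^ 2 * min (x t ⬝ᵥ (A t)⁻¹ *ᵥ x t) 1 :=
              sum_le_sum fun t ht ↦ hR t (mem_range.mp ht)
          _ ≤ 9 * c ^ 2 * (2 * (log (A T).det - log (A 0).det)) := by
              rw [← mul_sum]; gcongr
    _ = 3 * c * √(2 * T * (log (A T).det - log (A 0).det)) := by
        rw [show (T : ℝ) * (9 * c ^ 2 * (2 * (log (A T).det - log (A 0).det)))
            = (3 * c) ^ 2 * (2 * T * (log (A T).det - log (A 0).det)) by ring,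
          sqrt_mul (by positivity), sqrt_sq (by positivity)]

/-- Aggregation of per-step regret bounds: if `R_t² ≤ 9 c² min (x_tᵀ A_t⁻¹ x_t) 1`
along the recursion `A_{t+1} = A_t + x_t x_tᵀ`, then
`∑_{t<T} R_t ≤ 3 c √(2 T (log det A_T − log det A_0))`. -/
theorem stmt_14 {n : ℕ} (T : ℕ) (x : ℕ → (Fin n → ℝ))
    (A : ℕ → Matrix (Fin n) (Fin n) ℝ) (hA0 : (A 0).PosDef)
    (hrec : ∀ t, A (t + 1) = A t + vecMulVec (x t) (x t))
    (c : ℝ) (hc : 0 ≤ c) (R : ℕ → ℝ)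
    (hR0 : ∀ t < T, 0 ≤ R t)
    (hR : ∀ t < T, (R t) ^ 2 ≤ 9 * c ^ 2 * min (x t ⬝ᵥ ((A t)⁻¹ *ᵥ x t)) 1) :
    ∑ t ∈ Finset.range T, R t ≤
      3 * c * Real.sqrt (2 * T * (Real.log (A T).det - Real.log (A 0).det)) :=
  stmt_14_general T x A hA0 hrec c hc R hR
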